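/- arXiv:2205.01260 — 9 statements merged into one kernel-verified Lean document; each statement's English description precedes it below -/
import Mathlib

section
/- For any finite sequence x_1,...,x_N of real numbers with sum zero, and any constants λ, μ > 0, defining prices p_n = p_0 + λ·(x_1 + ... + x_{n-1}) + μ·x_n, the total trading profit -∑_{n=1}^N p_n x_n equals (2μ - λ)·(-(1/2)·∑_{n=1}^N x_n²). -/
lemma aux_cross (x : ℕ → ℝ) (N : ℕ) :
    2 * ∑ n ∈ Finset.range N, (∑ k ∈ Finset.range n, x k) * x n =
      (∑ n ∈ Finset.range N, x n) ^ 2 - ∑ n ∈ Finset.range N, (x n) ^ 2 := by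
  induction N with
  | zero => simp
  | succ N ih =>
    rw [Finset.sum_range_succ, Finset.sum_range_succ (f := x),
      Finset.sum_range_succ (f := fun n => (x n) ^ 2)]
    ring_nf
    ring_nf at ih
    linarith

/-- Round-trip trading profit formula in the Huberman–Stanzl benchmark model. -/
theorem stmt_0 (N : ℕ) (x : ℕ → ℝ) (hsum : ∑ n ∈ Finset.range N, x n = 0)
    (lam mu p0 : ℝ) (hlam : 0 < lam) (hmu : 0 < mu) :
    (-(∑ n ∈ Finset.range N,
        (p0 + lam * (∑ k ∈ Finset.range n, x k) + mu * x n) * x n)) =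
      (2 * mu - lam) * (-(1 / 2) * ∑ n ∈ Finset.range N, (x n) ^ 2) := by
  have h := aux_cross x N
  rw [hsum] at h
  have hexp : ∑ n ∈ Finset.range N,
      (p0 + lam * (∑ k ∈ Finset.range n, x k) + mu * x n) * x n =
      p0 * (∑ n ∈ Finset.range N, x n)
        + lam * ∑ n ∈ Finset.range N, (∑ k ∈ Finset.range n, x k) * x n
        + mu * ∑ n ∈ Finset.range N, (x n) ^ 2 := by
    rw [Finset.mul_sum, Finset.mul_sum, Finset.mul_sum, ← Finset.sum_add_distrib,
      ← Finset.sum_add_distrib]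
    apply Finset.sum_congr rfl
    intro n _
    ring
  rw [hexp, hsum]
  nlinarith [h]
end

section
/- For λ, μ > 0 with λ > 2μ, there exists a finite sequence x_1,...,x_N of real numbers with ∑ x_n = 0 such that the trading profit -∑_{n=1}^N p_n x_n (with p_n = p_0 + λ·∑_{k<n} x_k + μ·x_n) is strictly positive. -/
/-- If `lam > 2 mu`, there is a profitable round trip. -/
theorem stmt_2 (lam mu p0 : ℝ) (hlam : 0 < lam) (hmu : 0 < mu) (h : 2 * mu < lam) :
    ∃ (N : ℕ) (x : ℕ → ℝ), (∑ n ∈ Finset.range N, x n = 0) ∧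
      0 < (-(∑ n ∈ Finset.range N,
        (p0 + lam * (∑ k ∈ Finset.range n, x k) + mu * x n) * x n)) := by
  refine ⟨2, fun n => if n = 0 then 1 else -1, ?_, ?_⟩ <;>
    simp [Finset.sum_range_succ] <;> linarith
end

section
/- In the market with momentum traders, if a single speculator buys one unit in period 1 and sells it in period 2 (x¹ = 1, x² = -1), with no other trades, then the speculator's payoff p₂ - p₁ equals βμ² - 2μ + λ. Consequently, a no-trade Nash equilibrium requires βμ² - 2μ + λ ≤ 0. -/
/-- One speculator buys one unit then sells it; payoff is `β μ² - 2μ + λ`,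
so a no-trade Nash equilibrium requires `β μ² - 2μ + λ ≤ 0`. -/
theorem stmt_3 (beta lam mu p0 : ℝ) (hbeta : 0 ≤ beta) (hlam : 0 < lam) (hmu : 0 < mu)
    (q0 q1 q2 p1 p2 : ℝ)
    (hq0 : q0 = 0) (hq1 : q1 = 1) (hq2 : q2 = beta * mu - 1)
    (hp1 : p1 = p0 + (lam - mu) * q0 + mu * q1)
    (hp2 : p2 = p1 + (lam - mu) * q1 + mu * q2) :
    p2 - p1 = beta * mu ^ 2 - 2 * mu + lam ∧
    (p2 - p1 ≤ 0 ↔ beta * mu ^ 2 - 2 * mu + lam ≤ 0) := by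
  subst hq0 hq1 hq2 hp1 hp2
  constructor
  · ring
  · constructor <;> intro h <;> nlinarith
end

section
/- Let β, λ, μ > 0 with D := (βμ)² + 4β(λ - μ) > 0, and let (q_n) satisfy q_0 = 0, q_1 = 1, and q_{n+2} = βμ·q_{n+1} + β(λ - μ)·q_n. Then q_n > 0 for all n ≥ 1. -/
/-- If the discriminant is positive, the momentum recurrence stays positive. -/
theorem stmt_4 (beta lam mu : ℝ) (hbeta : 0 < beta) (hlam : 0 < lam) (hmu : 0 < mu)
    (hD : 0 < (beta * mu) ^ 2 + 4 * (beta * (lam - mu)))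
    (q : ℕ → ℝ) (hq0 : q 0 = 0) (hq1 : q 1 = 1)
    (hrec : ∀ n, q (n + 2) = beta * mu * q (n + 1) + beta * (lam - mu) * q n) :
    ∀ n, 1 ≤ n → 0 < q n := by
  set K := beta * mu with hK
  set J := beta * (lam - mu) with hJ
  set D := K ^ 2 + 4 * J with hDdef
  set s := Real.sqrt D with hs
  have hs2 : s ^ 2 = D := Real.sq_sqrt hD.le
  have hspos : 0 < s := Real.sqrt_pos.mpr hD
  have hKpos : 0 < K := mul_pos hbeta hmu
  set r1 := (K + s) / 2 with hr1
  set r2 := (K - s) / 2 with hr2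
  have hdiff : r1 - r2 = s := by rw [hr1, hr2]; ring
  have hroot1 : r1 ^ 2 = K * r1 + J := by
    rw [hr1]; nlinarith [hs2]
  have hroot2 : r2 ^ 2 = K * r2 + J := by
    rw [hr2]; nlinarith [hs2]
  have key : ∀ n, q n * s = r1 ^ n - r2 ^ n := by
    have H : ∀ n, q n * s = r1 ^ n - r2 ^ n ∧ q (n + 1) * s = r1 ^ (n + 1) - r2 ^ (n + 1) := by
      intro n
      induction n with
      | zero => constructor <;> simp [hq0, hq1, hdiff]
      | succ k ih =>
        refine ⟨ih.2, ?_⟩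
        have := hrec k
        rw [this]
        have e1 : r1 ^ (k + 2) = K * r1 ^ (k + 1) + J * r1 ^ k := by
          have : r1 ^ (k + 2) = r1 ^ 2 * r1 ^ k := by ring
          rw [this, hroot1]; ring
        have e2 : r2 ^ (k + 2) = K * r2 ^ (k + 1) + J * r2 ^ k := by
          have : r2 ^ (k + 2) = r2 ^ 2 * r2 ^ k := by ring
          rw [this, hroot2]; ring
        rw [e1, e2]
        linear_combination K * ih.2 + J * ih.1
    exact fun n => (H n).1
  intro n hn
  have habs : |r2| < r1 := by
    rw [abs_lt]
    constructor
    · rw [hr1, hr2]; nlinarith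
    · rw [hr1, hr2]; nlinarith
  have hpow : r2 ^ n < r1 ^ n := by
    calc r2 ^ n ≤ |r2 ^ n| := le_abs_self _
    _ = |r2| ^ n := by rw [abs_pow]
    _ < r1 ^ n := pow_lt_pow_left₀ habs (abs_nonneg _) (by omega)
  have := key n
  nlinarith [this, hpow, hspos]
end

section
/- Let K > 0 and J < 0 be real with D := K² + 4J < 0, and let (q_n) satisfy q_0 = 0, q_1 = 1, q_{n+2} = K q_{n+1} + J q_n. Then there exist infinitely many n with q_n < 0. -/
/-- Complex-root case: the solution is negative infinitely often. -/
theorem stmt_7 (K J : ℝ) (hK : 0 < K) (hJ : J < 0) (hD : K ^ 2 + 4 * J < 0)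
    (q : ℕ → ℝ) (hq0 : q 0 = 0) (hq1 : q 1 = 1)
    (hrec : ∀ n, q (n + 2) = K * q (n + 1) + J * q n) :
    {n : ℕ | q n < 0}.Infinite := by
  have hJ' : 0 < -J := by linarith
  set c : ℝ := (-(K ^ 2 + 4 * J)) / 4 with hc_def
  have hc : 0 < c := by
    have : 0 < -(K ^ 2 + 4 * J) := by linarith
    positivity
  -- the Cassini-type identity
  have hf : ∀ n, q (n + 1) ^ 2 - K * q (n + 1) * q n - J * q n ^ 2 = (-J) ^ n := by
    intro n
    induction n with
    | zero => simp [hq0, hq1]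
    | succ n ih =>
      show q (n + 2) ^ 2 - K * q (n + 2) * q (n + 1) - J * q (n + 1) ^ 2 = (-J) ^ (n + 1)
      linear_combination (-J) * ih + (q (n + 2) + J * q n) * hrec n
  by_contra hfin
  rw [Set.not_infinite] at hfin
  obtain ⟨N, hN⟩ := hfin.bddAbove
  -- eventual nonnegativity
  have hge : ∀ n, N + 1 ≤ n → 0 ≤ q n := by
    intro n hn
    by_contra hlt
    push_neg at hlt
    have := hN (show n ∈ {n : ℕ | q n < 0} from hlt)
    omega
  -- eventual bound q (n+1) ≤ K * q n
  have hle2 : ∀ n, N + 2 ≤ n → q (n + 1) ≤ K * q n := by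
    intro n hn
    have h := hrec (n - 1)
    rw [show n - 1 + 2 = n + 1 from by omega, show n - 1 + 1 = n from by omega] at h
    have h2 := hge (n - 1) (by omega)
    nlinarith [mul_nonpos_of_nonpos_of_nonneg hJ.le h2]
  -- eventual strict positivity
  have hpos' : ∀ n, N + 3 ≤ n → 0 < q n := by
    intro n hn
    have h0 : 0 ≤ q n := hge n (by omega)
    rcases h0.lt_or_eq with h | h
    · exact h
    · exfalso
      have hn1 : 0 ≤ q (n - 1) := hge _ (by omega)
      have hn2 : 0 ≤ q (n + 1) := hge _ (by omega)
      have h1 := hrec (n - 1)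
      rw [show n - 1 + 2 = n + 1 from by omega, show n - 1 + 1 = n from by omega,
        ← h] at h1
      simp only [mul_zero, zero_add] at h1
      have hz : J * q (n - 1) = 0 :=
        le_antisymm (mul_nonpos_of_nonpos_of_nonneg hJ.le hn1) (h1 ▸ hn2)
      have hq' : q (n - 1) = 0 := by
        rcases mul_eq_zero.1 hz with h' | h'
        · exact absurd h' hJ.ne
        · exact h'
      have hfn := hf (n - 1)
      rw [show n - 1 + 1 = n from by omega, ← h, hq'] at hfn
      have hp := pow_pos hJ' (n - 1)
      simp at hfn
      linarith
  -- the ratio decreases by at least c / K each step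
  have hstep : ∀ n, N + 3 ≤ n → q (n + 2) / q (n + 1) ≤ q (n + 1) / q n - c / K := by
    intro n hn
    have ha : 0 < q n := hpos' n (by omega)
    have hb : 0 < q (n + 1) := hpos' (n + 1) (by omega)
    have hba : q (n + 1) ≤ K * q n := hle2 n (by omega)
    have h4 : 0 < -(K ^ 2 + 4 * J) / 4 := by linarith
    have key : K * (q n * q (n + 2)) ≤ K * q (n + 1) ^ 2 - c * (q n * q (n + 1)) := by
      rw [hc_def, hrec n]
      nlinarith [mul_nonneg hK.le (sq_nonneg (q (n + 1) - K * q n / 2)),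
        mul_nonneg (mul_nonneg h4.le ha.le) (sub_nonneg.2 hba)]
    rw [div_sub_div _ _ ha.ne' hK.ne', div_le_div_iff₀ hb (mul_pos ha hK)]
    nlinarith [key]
  -- iterate the decrease
  have hdesc : ∀ k : ℕ,
      q (N + 3 + k + 1) / q (N + 3 + k) ≤ q (N + 4) / q (N + 3) - (k : ℝ) * (c / K) := by
    intro k
    induction k with
    | zero => norm_num
    | succ k ih =>
      have hs := hstep (N + 3 + k) (by omega)
      rw [show N + 3 + (k + 1) + 1 = N + 3 + k + 2 from by omega,
        show N + 3 + (k + 1) = N + 3 + k + 1 from by omega]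
      push_cast
      linarith
  have hcK : 0 < c / K := div_pos hc hK
  obtain ⟨k, hk⟩ := exists_nat_gt ((q (N + 4) / q (N + 3)) / (c / K))
  have hd := hdesc k
  have hq2 : 0 < q (N + 3 + k + 1) := hpos' _ (by omega)
  have hq1' : 0 < q (N + 3 + k) := hpos' _ (by omega)
  have hr : 0 < q (N + 3 + k + 1) / q (N + 3 + k) := div_pos hq2 hq1'
  have hk' : q (N + 4) / q (N + 3) < (k : ℝ) * (c / K) := by
    have := (div_lt_iff₀ hcK).1 hk
    linarith
  linarith
end

section
/- Let β, λ, μ > 0 with D := (βμ)² + 4β(λ-μ) ≥ 0. Define q_0 = 0, q_1 = 1, q_{n+2} = βμ q_{n+1} + β(λ-μ) q_n, and p_n = p_{n-1} + (λ-μ) q_{n-1} + μ q_n for n ≥ 1 (with p_0 given, q_0 = 0). Then the price sequence (p_n) is strictly increasing for n ≥ 1. -/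
/-- Lemma A.1: under `D ≥ 0`, prices increase monotonically from period 1 on. -/
theorem stmt_8 (beta lam mu p0 : ℝ) (hbeta : 0 < beta) (hlam : 0 < lam) (hmu : 0 < mu)
    (hD : 0 ≤ (beta * mu) ^ 2 + 4 * (beta * (lam - mu)))
    (q : ℕ → ℝ) (hq0 : q 0 = 0) (hq1 : q 1 = 1)
    (hqrec : ∀ n, q (n + 2) = beta * mu * q (n + 1) + beta * (lam - mu) * q n)
    (p : ℕ → ℝ) (hp0 : p 0 = p0)
    (hprec : ∀ n, p (n + 1) = p n + (lam - mu) * q n + mu * q (n + 1)) :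
    ∀ n, 1 ≤ n → p n < p (n + 1) := by
  -- First, positivity of q from index 1 on.
  have qpos : ∀ n, 0 ≤ q n ∧ 0 < q (n + 1) := by
    rcases le_or_gt mu lam with hle | hlt
    · -- nonnegative coefficient case
      intro n
      induction n with
      | zero => simp [hq0, hq1]
      | succ m ih =>
        obtain ⟨h1, h2⟩ := ih
        refine ⟨le_of_lt h2, ?_⟩
        rw [hqrec m]
        have : 0 < beta * mu * q (m + 1) := by positivity
        nlinarith [mul_nonneg (le_of_lt hbeta) (sub_nonneg.mpr hle)]
    · -- λ < μ : use the roots of the characteristic polynomial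
      set d := Real.sqrt ((beta * mu) ^ 2 + 4 * (beta * (lam - mu))) with hd
      have hd2 : d ^ 2 = (beta * mu) ^ 2 + 4 * (beta * (lam - mu)) := Real.sq_sqrt hD
      have hdnn : 0 ≤ d := Real.sqrt_nonneg _
      set r := (beta * mu + d) / 2 with hr
      set s := (beta * mu - d) / 2 with hs
      have hbm : 0 < beta * mu := mul_pos hbeta hmu
      have hspos : 0 < s := by
        have : d < beta * mu := by
          nlinarith [mul_pos hbeta (sub_pos.mpr hlt)]
        simp only [hs]; linarith
      have hrpos : 0 < r := by simp only [hr]; linarith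
      -- closed form relation
      have key : ∀ n, q (n + 1) = s * q n + r ^ n := by
        intro n
        induction n with
        | zero => simp [hq0, hq1]
        | succ m ih =>
          rw [hqrec m, ih]
          have hsum : r + s = beta * mu := by simp only [hr, hs]; ring
          have hprod : r * s = -(beta * (lam - mu)) := by
            simp only [hr, hs]; nlinarith [hd2]
          linear_combination (s * q m + r ^ m) * hsum - q m * hprod - (q m / 2) * hd2
      intro n
      induction n with
      | zero =>
        refine ⟨le_of_eq hq0.symm, ?_⟩
        rw [key 0]; simp [hq0]
      | succ m ih =>
        obtain ⟨h1, h2⟩ := ih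
        refine ⟨le_of_lt h2, ?_⟩
        rw [key (m + 1)]
        have : 0 < r ^ (m + 1) := pow_pos hrpos _
        nlinarith [mul_nonneg (le_of_lt hspos) (le_of_lt h2)]
  intro n hn
  rw [hprec n]
  have h := hqrec n
  have h2 := (qpos (n + 1)).2
  nlinarith [h2, hbeta]
end

section
/- For β ≥ 0 and λ, μ > 0, the linear system z_{n+1} = A z_n + B u_n, with A the 3×3 matrix with rows (1, λ-μ+βμ², β(λ-μ)μ), (0, βμ, β(λ-μ)), (0, 1, 0) and B = (μ, 1, 0)ᵀ, is controllable: the controllability matrix [B, AB, A²B] has rank 3. -/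
/-- The system is controllable: the controllability matrix has full rank 3. -/
theorem stmt_10 (beta lam mu : ℝ) (hbeta : 0 ≤ beta) (hlam : 0 < lam) (hmu : 0 < mu)
    (A : Matrix (Fin 3) (Fin 3) ℝ)
    (hA : A = !![1, lam - mu + beta * mu ^ 2, beta * (lam - mu) * mu;
                 0, beta * mu, beta * (lam - mu);
                 0, 1, 0])
    (B : Fin 3 → ℝ) (hB : B = ![mu, 1, 0])
    (W : Matrix (Fin 3) (Fin 3) ℝ)
    (hW : W = Matrix.of fun (i j : Fin 3) => ((A ^ (j : ℕ)).mulVec B) i) :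
    W.rank = 3 := by
  have hdet : W.det = lam := by
    subst hA hB hW
    simp [Matrix.det_fin_three, Matrix.mulVec, dotProduct, pow_succ,
      Matrix.mul_apply, Fin.sum_univ_succ, Matrix.one_apply, Matrix.vecHead, Matrix.vecTail, Function.comp]
    ring
  have hU : IsUnit W := by
    rw [Matrix.isUnit_iff_isUnit_det, hdet, isUnit_iff_ne_zero]
    exact hlam.ne'
  rw [Matrix.rank_of_isUnit W hU]
  simp
end

section
/- Let β ≥ 0 and λ, μ > 0. Then there exists a real 1×3 matrix S = (σ₁, σ₂, σ₃) such that every eigenvalue of A - BS has absolute value less than 1, where A has rows (1, λ-μ+βμ², β(λ-μ)μ), (0, βμ, β(λ-μ)), (0, 1, 0) and B = (μ, 1, 0)ᵀ. Consequently, for every initial state z₀, the feedback-controlled system z_{n+1} = (A - BS) z_n satisfies z_n → 0. -/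
/-!
Deadbeat control: the feedback `S` of the pole-placement formula for the target spectrum
`{0, 0, 0}` makes the closed-loop matrix `A - B S` nilpotent. Explicitly, `A - B S` is
block lower triangular with zero last column, and its upper-left `2 × 2` block has trace and
determinant zero, so `(A - B S)³ = 0`. Hence `0` is its only eigenvalue and every orbit
vanishes after three steps.
-/

open Filter Polynomial

namespace Matrix

variable {n R : Type*} [Fintype n] [DecidableEq n]

theorem charpoly_eq_X_pow_of_isNilpotent [CommRing R] [IsDomain R] {M : Matrix n n R}
    (hM : IsNilpotent M) : M.charpoly = X ^ Fintype.card n :=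
  sub_eq_zero.mp (isNilpotent_charpoly_sub_pow_of_isNilpotent hM).eq_zero

theorem eq_zero_of_isRoot_charpoly_of_isNilpotent [CommRing R] [IsDomain R] {M : Matrix n n R}
    (hM : IsNilpotent M) {φ : R} (hφ : M.charpoly.IsRoot φ) : φ = 0 := by
  rw [charpoly_eq_X_pow_of_isNilpotent hM, IsRoot, eval_pow, eval_X] at hφ
  exact (pow_eq_zero_iff'.mp hφ).1

theorem tendsto_pow_mulVec_of_isNilpotent [Semiring R] [TopologicalSpace R] {M : Matrix n n R}
    (hM : IsNilpotent M) (v : n → R) : Tendsto (fun k : ℕ => (M ^ k) *ᵥ v) atTop (nhds 0) := by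
  obtain ⟨k, hk⟩ := hM
  refine tendsto_atTop_of_eventually_const (i₀ := k) fun j hj => ?_
  rw [pow_eq_zero_of_le hj hk, zero_mulVec]

end Matrix

section Market

variable {K : Type*} [Field K] (beta lam mu : K)

def marketMatrix : Matrix (Fin 3) (Fin 3) K :=
  !![1, lam - mu + beta * mu ^ 2, beta * (lam - mu) * mu;
     0, beta * mu, beta * (lam - mu);
     0, 1, 0]

def marketInput : Matrix (Fin 3) (Fin 1) K := !![mu; 1; 0]

def deadbeatGain : Matrix (Fin 1) (Fin 3) K :=
  !![1 / lam, -mu / lam + beta * mu + 1, beta * (lam - mu)]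

variable {beta lam mu}

theorem marketMatrix_sub_marketInput_mul_deadbeatGain (hlam : lam ≠ 0) :
    marketMatrix beta lam mu - marketInput mu * deadbeatGain beta lam mu =
      !![1 - mu / lam, (lam - mu) ^ 2 / lam, 0;
         -(1 / lam), mu / lam - 1, 0;
         0, 1, 0] := by
  ext i j
  fin_cases i <;> fin_cases j <;>
    simp [marketMatrix, marketInput, deadbeatGain] <;> field_simp <;> ring

theorem marketMatrix_sub_marketInput_mul_deadbeatGain_pow_three (hlam : lam ≠ 0) :
    (marketMatrix beta lam mu - marketInput mu * deadbeatGain beta lam mu) ^ 3 = 0 := by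
  rw [marketMatrix_sub_marketInput_mul_deadbeatGain hlam, pow_three]
  ext i j
  fin_cases i <;> fin_cases j <;>
    simp [Matrix.mul_apply, Fin.sum_univ_three] <;> field_simp <;> ring

end Market

theorem stmt_12_general (beta lam mu : ℝ) (hlam : 0 < lam)
    (A : Matrix (Fin 3) (Fin 3) ℝ)
    (hA : A = !![1, lam - mu + beta * mu ^ 2, beta * (lam - mu) * mu;
                 0, beta * mu, beta * (lam - mu);
                 0, 1, 0])
    (B : Matrix (Fin 3) (Fin 1) ℝ) (hB : B = !![mu; 1; 0]) :
    ∃ S : Matrix (Fin 1) (Fin 3) ℝ,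
      (∀ phi : ℂ, ((A - B * S).map (Complex.ofReal ·)).charpoly.IsRoot phi →
        ‖phi‖ < 1) ∧
      (∀ z0 : Fin 3 → ℝ,
        Tendsto (fun n : ℕ => ((A - B * S) ^ n).mulVec z0) atTop (nhds 0)) := by
  subst hA hB
  have hnil : IsNilpotent (marketMatrix beta lam mu - marketInput mu * deadbeatGain beta lam mu) :=
    ⟨3, marketMatrix_sub_marketInput_mul_deadbeatGain_pow_three hlam.ne'⟩
  refine ⟨deadbeatGain beta lam mu, fun phi hphi => ?_,
    Matrix.tendsto_pow_mulVec_of_isNilpotent hnil⟩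
  rw [Matrix.eq_zero_of_isRoot_charpoly_of_isNilpotent
    (hnil.map Complex.ofRealHom.mapMatrix) hphi, norm_zero]
  exact one_pos

/-- Market stabilization: some linear feedback `S` places all eigenvalues of
`A - BS` inside the unit disk, and the closed-loop state converges to zero. -/
theorem stmt_12 (beta lam mu : ℝ) (hbeta : 0 ≤ beta) (hlam : 0 < lam) (hmu : 0 < mu)
    (A : Matrix (Fin 3) (Fin 3) ℝ)
    (hA : A = !![1, lam - mu + beta * mu ^ 2, beta * (lam - mu) * mu;
                 0, beta * mu, beta * (lam - mu);
                 0, 1, 0])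
    (B : Matrix (Fin 3) (Fin 1) ℝ) (hB : B = !![mu; 1; 0]) :
    ∃ S : Matrix (Fin 1) (Fin 3) ℝ,
      (∀ phi : ℂ, ((A - B * S).map (Complex.ofReal ·)).charpoly.IsRoot phi →
        ‖phi‖ < 1) ∧
      (∀ z0 : Fin 3 → ℝ,
        Tendsto (fun n : ℕ => ((A - B * S) ^ n).mulVec z0) atTop (nhds 0)) :=
  stmt_12_general beta lam mu hlam A hA B hB
end

section
/- For every β > 0, neither M₁(β) ⊆ M₂(β) nor M₂(β) ⊆ M₁(β) holds: there exist (λ,μ) with λ,μ > 0 satisfying βμ² - 2μ + λ ≤ 0 but βμ² - 4μ + 4λ ≥ 0, and there exist (λ,μ) with λ,μ > 0 satisfying βμ² - 4μ + 4λ < 0 but βμ² - 2μ + λ > 0. -/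
/-! Scaling `λ` and `μ` by `1 / β` makes both quadratic forms `β`-free up to a factor `1 / β`.
At `(λ, μ) = (1/β, 1/β)` the first form vanishes while the second equals `1/β`; at
`(λ, μ) = (1/(2β), 2/β)` the second equals `-2/β` while the first equals `1/(2β)`. -/

/-- Neither `M₁(β) ⊆ M₂(β)` nor `M₂(β) ⊆ M₁(β)`. -/
theorem stmt_14 (beta : ℝ) (hbeta : 0 < beta) :
    (∃ lam mu : ℝ, 0 < lam ∧ 0 < mu ∧
      beta * mu ^ 2 - 2 * mu + lam ≤ 0 ∧ 0 ≤ beta * mu ^ 2 - 4 * mu + 4 * lam) ∧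
    (∃ lam mu : ℝ, 0 < lam ∧ 0 < mu ∧
      beta * mu ^ 2 - 4 * mu + 4 * lam < 0 ∧ 0 < beta * mu ^ 2 - 2 * mu + lam) := by
  have hb := hbeta.ne'
  refine ⟨⟨1 / beta, 1 / beta, by positivity, by positivity, ?_, ?_⟩,
    ⟨1 / (2 * beta), 2 / beta, by positivity, by positivity, ?_, ?_⟩⟩
  · calc _ = (0 : ℝ) := by field_simp; ring
      _ ≤ 0 := le_rfl
  · calc (0 : ℝ) ≤ 1 / beta := by positivity
      _ = _ := by field_simp; ring
  · calc _ = -(2 / beta) := by field_simp; ring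
      _ < 0 := neg_neg_of_pos (by positivity)
  · calc (0 : ℝ) < 1 / (2 * beta) := by positivity
      _ = _ := by field_simp; ring
end
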